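/- For all integers i, j ≥ 1, ζ(2i)·ζ(2j)·(2^{2i} - 2)·(2^{2j} - 2) < ζ(2i+2j)·(2^{2i+2j} - 2). -/
import Mathlib

/-- The Riemann zeta function for real arguments `s > 1`,
defined as `∑_{n=1}^∞ n^{-s}`. -/
noncomputable def zetaR (s : ℝ) : ℝ := ∑' n : ℕ, ((n : ℝ) + 1) ^ (-s)

namespace ZetaAux

noncomputable def f (s : ℝ) (n : ℕ) : ℝ := ((n : ℝ) + 1) ^ (-s)

lemma f_nonneg (s : ℝ) (n : ℕ) : 0 ≤ f s n := Real.rpow_nonneg (by positivity) _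

lemma f_anti {s : ℝ} (hs : 0 < s) {m n : ℕ} (h : m < n) : f s n < f s m := by
  have h1 : ((m:ℝ)) < (n:ℝ) := Nat.cast_lt.mpr h
  exact Real.rpow_lt_rpow_of_neg (by positivity) (by linarith) (by linarith)

lemma summable_f {s : ℝ} (hs : 1 < s) : Summable (f s) := by
  have h : Summable (fun n : ℕ => ((n : ℝ) ^ s)⁻¹) := Real.summable_nat_rpow_inv.mpr hs
  have h2 := (summable_nat_add_iff 1).mpr h
  refine h2.congr fun n => ?_
  rw [f, Real.rpow_neg (by positivity)]
  push_cast
  norm_num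

lemma summable_comp {s : ℝ} (hs : 1 < s) (g : ℕ → ℕ) (hg : Function.Injective g) :
    Summable (fun n => f s (g n)) := (summable_f hs).comp_injective hg

/-- the even-indexed sum (values 2,4,6,...) equals `2^{-s} ζ(s)` -/
lemma even_sum {s : ℝ} : (∑' n : ℕ, f s (2 * n + 1)) = (2:ℝ) ^ (-s) * zetaR s := by
  rw [show zetaR s = ∑' n, f s n from rfl, ← tsum_mul_left]
  congr 1; funext n
  have : ((2 * n + 1 : ℕ) : ℝ) + 1 = 2 * ((n : ℝ) + 1) := by push_cast; ring
  rw [f, f, this, Real.mul_rpow (by norm_num) (by positivity)]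

noncomputable def eta (s : ℝ) : ℝ := zetaR s * (1 - 2 * (2:ℝ) ^ (-s))

lemma eta_eq {s : ℝ} (hs : 1 < s) :
    eta s = (∑' n : ℕ, f s (2 * n)) - (∑' n : ℕ, f s (2 * n + 1)) := by
  have he : Summable (fun n => f s (2 * n)) := summable_comp hs _ (fun a b => by omega)
  have ho : Summable (fun n => f s (2 * n + 1)) := summable_comp hs _ (fun a b => by omega)
  have hz : zetaR s = (∑' n : ℕ, f s (2 * n)) + (∑' n : ℕ, f s (2 * n + 1)) :=
    (tsum_even_add_odd he ho).symm
  have hE : (∑' n : ℕ, f s (2 * n + 1)) = (2:ℝ) ^ (-s) * zetaR s := even_sum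
  rw [eta]
  linear_combination hz + 2 * hE

lemma eta_gt {s : ℝ} (hs : 1 < s) : 1 - (2:ℝ) ^ (-s) < eta s := by
  have he : Summable (fun n => f s (2 * n)) := summable_comp hs _ (fun a b => by omega)
  have ho : Summable (fun n => f s (2 * n + 1)) := summable_comp hs _ (fun a b => by omega)
  set d : ℕ → ℝ := fun n => f s (2 * n) - f s (2 * n + 1) with hd
  have hdsum : Summable d := he.sub ho
  have hdnn : ∀ n, 0 ≤ d n := fun n => sub_nonneg.mpr (f_anti (by linarith) (by omega)).le
  have h1 : eta s = ∑' n, d n := (eta_eq hs).trans (Summable.tsum_sub he ho).symm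
  have h23 : d 0 + d 1 ≤ ∑' n, d n := by
    have h := Summable.sum_le_tsum (Finset.range 2) (fun i _ => hdnn i) hdsum
    simpa [Finset.sum_range_succ] using h
  have h4 : 0 < d 1 := sub_pos.mpr (f_anti (by linarith) (by omega))
  have h5 : d 0 = 1 - (2:ℝ) ^ (-s) := by
    show f s 0 - f s 1 = _
    rw [f, f]
    norm_num
  linarith

lemma eta_lt {s : ℝ} (hs : 1 < s) : eta s < 1 - (2:ℝ) ^ (-s) + (3:ℝ) ^ (-s) := by
  have he : Summable (fun n => f s (2 * n)) := summable_comp hs _ (fun a b => by omega)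
  have ho : Summable (fun n => f s (2 * n + 1)) := summable_comp hs _ (fun a b => by omega)
  have ht : Summable (fun n => f s (2 * n + 2)) := summable_comp hs _ (fun a b => by omega)
  set e : ℕ → ℝ := fun n => f s (2 * n + 1) - f s (2 * n + 2) with hde
  have hesum : Summable e := ho.sub ht
  have henn : ∀ n, 0 ≤ e n := fun n => sub_nonneg.mpr (f_anti (by linarith) (by omega)).le
  have h1 : (∑' n, e n) = (∑' n, f s (2 * n + 1)) - (∑' n, f s (2 * n + 2)) := Summable.tsum_sub ho ht
  have hO : (∑' n, f s (2 * n)) = f s 0 + ∑' n, f s (2 * (n + 1)) := Summable.tsum_eq_zero_add he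
  have hO' : (∑' n : ℕ, f s (2 * (n + 1))) = ∑' n, f s (2 * n + 2) := by
    exact tsum_congr fun n => by rw [show 2 * (n + 1) = 2 * n + 2 from by ring]
  have hf0 : f s 0 = 1 := by rw [f]; norm_num
  have hkey : 1 - eta s = ∑' n, e n := by
    rw [eta_eq hs, h1, hO, hO', hf0]; ring
  have h23 : e 0 + e 1 ≤ ∑' n, e n := by
    have h := Summable.sum_le_tsum (Finset.range 2) (fun i _ => henn i) hesum
    simpa [Finset.sum_range_succ] using h
  have h4 : 0 < e 1 := sub_pos.mpr (f_anti (by linarith) (by omega))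
  have h5 : e 0 = (2:ℝ) ^ (-s) - (3:ℝ) ^ (-s) := by
    show f s 1 - f s 2 = _
    simp only [f]
    norm_num
  linarith

lemma eta_mul_lt {a b : ℝ} (ha : 2 ≤ a) (hb : 2 ≤ b) : eta a * eta b < eta (a + b) := by
  have ha1 : (1:ℝ) < a := by linarith
  have hb1 : (1:ℝ) < b := by linarith
  have hab1 : (1:ℝ) < a + b := by linarith
  have two_pos : (0:ℝ) < 2 := by norm_num
  -- bounds
  have hua : eta a < 1 - (2:ℝ)^(-a) + (3:ℝ)^(-a) := eta_lt ha1
  have hub : eta b < 1 - (2:ℝ)^(-b) + (3:ℝ)^(-b) := eta_lt hb1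
  have hla : 1 - (2:ℝ)^(-a) < eta a := eta_gt ha1
  have hlb : 1 - (2:ℝ)^(-b) < eta b := eta_gt hb1
  have hlc : 1 - (2:ℝ)^(-(a+b)) < eta (a+b) := eta_gt hab1
  have hsplit : (2:ℝ)^(-(a+b)) = (2:ℝ)^(-a) * (2:ℝ)^(-b) := by
    rw [← Real.rpow_add two_pos]; ring_nf
  have h14 : (2:ℝ) ^ (-2:ℝ) = 1/4 := by
    rw [show (-2:ℝ) = ((-2:ℤ):ℝ) by norm_num, Real.rpow_intCast]; norm_num
  have hta : (2:ℝ)^(-a) ≤ 1/4 := by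
    calc (2:ℝ)^(-a) ≤ (2:ℝ)^(-2:ℝ) :=
          Real.rpow_le_rpow_of_exponent_le (by norm_num) (by linarith)
      _ = 1/4 := h14
  have htb : (2:ℝ)^(-b) ≤ 1/4 := by
    calc (2:ℝ)^(-b) ≤ (2:ℝ)^(-2:ℝ) :=
          Real.rpow_le_rpow_of_exponent_le (by norm_num) (by linarith)
      _ = 1/4 := h14
  have htap : (0:ℝ) < (2:ℝ)^(-a) := Real.rpow_pos_of_pos two_pos _
  have htbp : (0:ℝ) < (2:ℝ)^(-b) := Real.rpow_pos_of_pos two_pos _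
  have hsa : (3:ℝ)^(-a) ≤ (4/9) * (2:ℝ)^(-a) := by
    have h3 : (3:ℝ)^(-a) = (2:ℝ)^(-a) * ((3:ℝ)/2)^(-a) := by
      rw [← Real.mul_rpow (by norm_num) (by norm_num)]; norm_num
    have h49 : ((3:ℝ)/2) ^ (-2:ℝ) = 4/9 := by
      rw [show (-2:ℝ) = ((-2:ℤ):ℝ) by norm_num, Real.rpow_intCast]; norm_num
    have h4 : ((3:ℝ)/2)^(-a) ≤ 4/9 := by
      calc ((3:ℝ)/2)^(-a) ≤ ((3:ℝ)/2)^(-2:ℝ) :=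
            Real.rpow_le_rpow_of_exponent_le (by norm_num) (by linarith)
        _ = 4/9 := h49
    rw [h3]; nlinarith
  have hsb : (3:ℝ)^(-b) < (2:ℝ)^(-b) :=
    Real.rpow_lt_rpow_of_neg (by norm_num) (by norm_num) (by linarith)
  set ta := (2:ℝ)^(-a)
  set tb := (2:ℝ)^(-b)
  set ua := ta - (3:ℝ)^(-a) with hua'
  set ub := tb - (3:ℝ)^(-b) with hub'
  have h1 : eta a ≤ 1 - ua := by rw [hua']; linarith
  have h2 : eta b ≤ 1 - ub := by rw [hub']; linarith
  have huale : ua ≤ 1/4 := by rw [hua']; nlinarith [Real.rpow_nonneg (by norm_num : (0:ℝ) ≤ 3) (-a)]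
  have huble : ub ≤ 1/4 := by rw [hub']; nlinarith [Real.rpow_nonneg (by norm_num : (0:ℝ) ≤ 3) (-b)]
  have hubpos : 0 < ub := by rw [hub']; linarith
  have hualb : (5/9) * ta ≤ ua := by rw [hua']; linarith
  have hxpos : (0:ℝ) ≤ eta a := by linarith
  have hprod : eta a * eta b ≤ (1 - ua) * (1 - ub) :=
    mul_le_mul h1 h2 (by linarith) (by linarith)
  have hstep : (1 - ua) * (1 - ub) < 1 - ta * tb := by
    nlinarith [mul_nonneg hubpos.le (by linarith : (0:ℝ) ≤ 1 - ua),
      mul_le_mul_of_nonneg_left htb htap.le]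
  linarith

lemma zeta_eta {s : ℝ} : zetaR s * ((2:ℝ) ^ s - 2) = (2:ℝ) ^ s * eta s := by
  have h : (2:ℝ) ^ s * (2:ℝ) ^ (-s) = 1 := by
    rw [← Real.rpow_add (by norm_num)]; simp
  rw [eta]
  linear_combination 2 * zetaR s * h

end ZetaAux

/-- For all integers `i, j ≥ 1`,
`ζ(2i)·ζ(2j)·(2^{2i} − 2)·(2^{2j} − 2) < ζ(2i+2j)·(2^{2i+2j} − 2)`. -/
theorem zeta_product_lt (i j : ℕ) (hi : 1 ≤ i) (hj : 1 ≤ j) :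
    zetaR (2 * i) * zetaR (2 * j) * ((2 : ℝ) ^ (2 * i) - 2) * ((2 : ℝ) ^ (2 * j) - 2) <
      zetaR (2 * i + 2 * j) * ((2 : ℝ) ^ (2 * i + 2 * j) - 2) := by
  open ZetaAux in
  have hi' : (1:ℝ) ≤ i := by exact_mod_cast hi
  have hj' : (1:ℝ) ≤ j := by exact_mod_cast hj
  set a : ℝ := 2 * (i:ℝ) with hadef
  set b : ℝ := 2 * (j:ℝ) with hbdef
  have ha : (2:ℝ) ≤ a := by rw [hadef]; linarith
  have hb : (2:ℝ) ≤ b := by rw [hbdef]; linarith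
  have c1 : ((2:ℝ) ^ (2 * i) : ℝ) = (2:ℝ) ^ a := by
    rw [← Real.rpow_natCast (2:ℝ) (2 * i)]; push_cast; rfl
  have c2 : ((2:ℝ) ^ (2 * j) : ℝ) = (2:ℝ) ^ b := by
    rw [← Real.rpow_natCast (2:ℝ) (2 * j)]; push_cast; rfl
  have c3 : ((2:ℝ) ^ (2 * i + 2 * j) : ℝ) = (2:ℝ) ^ (a + b) := by
    rw [← Real.rpow_natCast (2:ℝ) (2 * i + 2 * j)]; push_cast; rfl
  rw [c1, c2, c3]
  have hpow : (2:ℝ) ^ (a + b) = (2:ℝ) ^ a * (2:ℝ) ^ b := Real.rpow_add (by norm_num) a b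
  calc zetaR a * zetaR b * ((2:ℝ) ^ a - 2) * ((2:ℝ) ^ b - 2)
      = (zetaR a * ((2:ℝ) ^ a - 2)) * (zetaR b * ((2:ℝ) ^ b - 2)) := by ring
    _ = ((2:ℝ) ^ a * eta a) * ((2:ℝ) ^ b * eta b) := by rw [zeta_eta, zeta_eta]
    _ = ((2:ℝ) ^ a * (2:ℝ) ^ b) * (eta a * eta b) := by ring
    _ < ((2:ℝ) ^ a * (2:ℝ) ^ b) * eta (a + b) := by
        exact mul_lt_mul_of_pos_left (eta_mul_lt ha hb) (by positivity)
    _ = zetaR (a + b) * ((2:ℝ) ^ (a + b) - 2) := by rw [← hpow, zeta_eta]
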